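/- Let σ < π be permutations in the classical permutation pattern order, with π of length n. If there exists a linear ordering of the embeddings of σ in π (which are the atoms of Â*(σ,π)) satisfying condition (R2) in the bounded poset Â*(σ,π), then Â*(σ,π) admits a recursive atom ordering. -/

import Mathlib

attribute [local instance] Classical.propDecidable

noncomputable instance {α : Type*} [Fintype α] : Fintype (WithBot α) :=
  inferInstanceAs (Fintype (Option α))
noncomputable instance {α : Type*} [Fintype α] : Fintype (WithTop α) :=
  inferInstanceAs (Fintype (Option α))

/-- The Möbius function of a finite partial order. -/
noncomputable def mob {α : Type*} [Preorder α] [Fintype α] (a b : α) : ℤ :=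
  letI := Classical.decEq α
  letI : DecidableRel (α := α) (· ≤ ·) := Classical.decRel _
  letI : DecidableRel (α := α) (· < ·) := Classical.decRel _
  letI : LocallyFiniteOrder α := Fintype.toLocallyFiniteOrder
  IncidenceAlgebra.mu ℤ a b

/-- The bounded poset obtained by adjoining a new minimum `0̂` and maximum `1̂`. -/
abbrev Bd (α : Type*) := WithBot (WithTop α)

/-- The Möbius number `μ(0̂,1̂)` of a finite poset with a new minimum and maximum adjoined. -/
noncomputable def mobHat (α : Type*) [Preorder α] [Fintype α] : ℤ :=
  mob (⊥ : Bd α) ⊤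

/-- Classical pattern containment for (reduced) permutations. -/
def PermLE {m n : ℕ} (σ : Equiv.Perm (Fin m)) (π : Equiv.Perm (Fin n)) : Prop :=
  ∃ f : Fin m → Fin n, StrictMono f ∧ ∀ i j : Fin m, σ i < σ j ↔ π (f i) < π (f j)

/-- Strict classical pattern containment. -/
def PermLT {m n : ℕ} (σ : Equiv.Perm (Fin m)) (π : Equiv.Perm (Fin n)) : Prop :=
  PermLE σ π ∧ ¬ PermLE π σ

/-- `red π S` is the permutation of length `S.card` order-isomorphic to `π`
restricted to the set of positions `S`. -/
noncomputable def red {n : ℕ} (π : Equiv.Perm (Fin n)) (S : Finset (Fin n)) :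
    Equiv.Perm (Fin S.card) := by
  classical
  have hcard : (S.image fun x => π x).card = S.card :=
    Finset.card_image_of_injective _ π.injective
  refine Equiv.ofBijective (fun i =>
    ((S.image fun x => π x).orderIsoOfFin hcard).symm
      ⟨π (S.orderIsoOfFin rfl i), Finset.mem_image_of_mem _ (S.orderIsoOfFin rfl i).2⟩)
    (Finite.injective_iff_bijective.mp ?_)
  intro i j hij
  have h2 := congrArg (fun z => ((((S.image fun x => π x).orderIsoOfFin hcard) z : Fin n)))
    hij
  simp only [OrderIso.apply_symm_apply] at h2
  have h4 := π.injective h2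
  have h5 : (S.orderIsoOfFin rfl) i = (S.orderIsoOfFin rfl) j := Subtype.ext h4
  exact (S.orderIsoOfFin rfl).injective h5

/-- `S` is an embedding (occurrence set) of `σ` in `π`, i.e. `red(π|_S) = σ`. -/
def IsEmb {n m : ℕ} (π : Equiv.Perm (Fin n)) (S : Finset (Fin n))
    (σ : Equiv.Perm (Fin m)) : Prop :=
  ∃ h : S.card = m, ∀ i : Fin S.card, (red π S i : ℕ) = (σ (Fin.cast h i) : ℕ)

/-- `E(σ,π)`: the number of embeddings of `σ` in `π`. -/
noncomputable def permE {m n : ℕ} (σ : Equiv.Perm (Fin m)) (π : Equiv.Perm (Fin n)) : ℕ :=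
  (Finset.univ.filter fun S : Finset (Fin n) => IsEmb π S σ).card

/-- The poset `A*(λ,π)` of proper position sets `S ⊊ Fin n` with `λ ≤ red(π|_S)`,
ordered by inclusion. -/
abbrev AstarP {n k : ℕ} (π : Equiv.Perm (Fin n)) (lam : Equiv.Perm (Fin k)) :=
  {S : Finset (Fin n) // S ≠ Finset.univ ∧ PermLE lam (red π S)}

/-- The predecessor position. -/
def predPos {n : ℕ} (p : Fin n) : Fin n :=
  ⟨p.1 - 1, lt_of_le_of_lt (Nat.sub_le p.1 1) p.2⟩

/-- `p` lies in the tail of an adjacency of `π`: `p` is not the first position and the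
values of `π` at `p−1` and `p` differ by exactly one (consecutive positions in a maximal
block on which the values increase by exactly 1 at each step or decrease by exactly 1 at
each step). -/
def tailPos {n : ℕ} (π : Equiv.Perm (Fin n)) (p : Fin n) : Prop :=
  0 < p.1 ∧ ((π p : ℕ) = (π (predPos p) : ℕ) + 1 ∨ (π (predPos p) : ℕ) = (π p : ℕ) + 1)

/-- A normal embedding: an embedding containing every position in the tail of an
adjacency of `π`. -/
def IsNormalEmb {n m : ℕ} (π : Equiv.Perm (Fin n)) (S : Finset (Fin n))
    (σ : Equiv.Perm (Fin m)) : Prop :=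
  IsEmb π S σ ∧ ∀ p : Fin n, tailPos π p → p ∈ S

/-- `NE(σ,π)`: the number of normal embeddings of `σ` in `π`. -/
noncomputable def permNE {m n : ℕ} (σ : Equiv.Perm (Fin m)) (π : Equiv.Perm (Fin n)) : ℕ :=
  (Finset.univ.filter fun S : Finset (Fin n) => IsNormalEmb π S σ).card

/-- A set of positions is representative if within every adjacency of `π` its positions
form a suffix of the adjacency. -/
def ReprP {n : ℕ} (π : Equiv.Perm (Fin n)) (S : Finset (Fin n)) : Prop :=
  ∀ p : Fin n, tailPos π p → predPos p ∈ S → p ∈ S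

/-- The poset `R*(λ,π)` of representative proper position sets `S ⊊ Fin n` with
`λ ≤ red(π|_S)`, ordered by inclusion. -/
abbrev RstarP {n k : ℕ} (π : Equiv.Perm (Fin n)) (lam : Equiv.Perm (Fin k)) :=
  {S : Finset (Fin n) // S ≠ Finset.univ ∧ ReprP π S ∧ PermLE lam (red π S)}

/-- The element of the bounded poset `Bd α` corresponding to `a : α`. -/
def toBd {α : Type*} (a : α) : Bd α := ((a : WithTop α) : Bd α)

/-- A rooted chain: a saturated chain starting at the bottom element. -/
def RootedChain {α : Type*} [Preorder α] [OrderBot α] (c : List α) : Prop :=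
  c.head? = some ⊥ ∧ c.Chain' (· ⋖ ·)

/-- The poset `α` (with bottom element `0̂`) admits a recursive atom ordering: there is
an assignment, to each rooted interval `[t,1̂]_c`, of a linear ordering `ord c` of the
atoms of `t` (the elements covering `t`), satisfying conditions (R1) and (R2). -/
def HasRAO (α : Type*) [PartialOrder α] [OrderBot α] : Prop :=
  ∃ ord : List α → α → α → Prop,
    (∀ c : List α, RootedChain c → ∀ t : α, c.getLast? = some t →
      ((∀ a b : α, t ⋖ a → t ⋖ b → a ≠ b → (ord c a b ∨ ord c b a)) ∧
       (∀ a b : α, ord c a b → ¬ ord c b a) ∧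
       (∀ a b d : α, ord c a b → ord c b d → ord c a d) ∧
       -- (R2)
       (∀ a b : α, t ⋖ a → t ⋖ b → ord c a b → ∀ y : α, a ≤ y → b ≤ y →
         ∃ k, t ⋖ k ∧ ord c k b ∧ ∃ z, b ⋖ z ∧ z ≤ y ∧ k < z))) ∧
    -- (R1)
    (∀ (c' : List α) (β t : α), RootedChain (c' ++ [t]) → c'.getLast? = some β →
      ∀ a b : α, t ⋖ a → t ⋖ b →
        (∃ γ, β ⋖ γ ∧ ord c' γ t ∧ γ ⋖ a) →
        ¬ (∃ γ, β ⋖ γ ∧ ord c' γ t ∧ γ ⋖ b) → ord (c' ++ [t]) a b)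

/-!
Above `0̂` the poset `Â*(σ,π)` is upper semimodular: `WithTop A*(σ,π)` is an upper set of the
Boolean lattice of position sets (with `1̂ = univ`), so the covers of `S` are the sets
`insert x S`, and two distinct covers `insert x S`, `insert w S` below `y` give
`insert x (insert w S)`, which covers the second, lies above the first and below `y`. Hence at
every rooted interval `[t,1̂]_c` with `t ≠ 0̂` every linear ordering of the atoms satisfies (R2)
with `k = a`. Ordering first the atoms that cover an atom placed before `t` at the previous level,
and breaking ties by a fixed well-ordering, gives (R1) by construction; at `0̂` the atoms are the
embeddings, and the given ordering is used.
-/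

section PatternContainment

variable {m n : ℕ}

lemma red_lt_red_iff (π : Equiv.Perm (Fin n)) (S : Finset (Fin n)) (i j : Fin S.card) :
    red π S i < red π S j ↔ π (S.orderEmbOfFin rfl i) < π (S.orderEmbOfFin rfl j) := by
  simp only [red, Equiv.ofBijective_apply, OrderIso.lt_iff_lt, Subtype.mk_lt_mk,
    Finset.coe_orderIsoOfFin_apply]

lemma val_eq_of_lt_iff_lt {c : ℕ} (τ : Equiv.Perm (Fin c)) (σ : Equiv.Perm (Fin m)) (h : c = m)
    (hlt : ∀ i j, τ i < τ j ↔ σ (Fin.cast h i) < σ (Fin.cast h j)) (i : Fin c) :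
    (τ i : ℕ) = σ (Fin.cast h i) := by
  subst h
  have hmono : StrictMono (τ ∘ σ.symm) := fun a b hab => (hlt _ _).2 (by simpa using hab)
  simpa using congrArg Fin.val (hmono.apply_eq (x := σ i))

lemma PermLE.card_le {k : ℕ} {σ : Equiv.Perm (Fin m)} {τ : Equiv.Perm (Fin k)}
    (h : PermLE σ τ) : m ≤ k := by
  obtain ⟨f, hf, -⟩ := h
  simpa using Fintype.card_le_of_injective f hf.injective

variable {σ : Equiv.Perm (Fin m)} {π : Equiv.Perm (Fin n)}

lemma permLE_red_iff {S : Finset (Fin n)} :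
    PermLE σ (red π S) ↔ ∃ f : Fin m → Fin n, StrictMono f ∧ (∀ i, f i ∈ S) ∧
      ∀ i j, σ i < σ j ↔ π (f i) < π (f j) := by
  constructor
  · rintro ⟨g, hg, hord⟩
    refine ⟨S.orderEmbOfFin rfl ∘ g, (S.orderEmbOfFin rfl).strictMono.comp hg,
      fun i => S.orderEmbOfFin_mem rfl _, fun i j => ?_⟩
    rw [hord, red_lt_red_iff, Function.comp_apply, Function.comp_apply]
  · rintro ⟨f, hf, hfS, hord⟩
    let g : Fin m → Fin S.card := fun i => (S.orderIsoOfFin rfl).symm ⟨f i, hfS i⟩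
    have hg : ∀ i, S.orderEmbOfFin rfl (g i) = f i := fun i => by
      rw [← Finset.coe_orderIsoOfFin_apply, OrderIso.apply_symm_apply]
    refine ⟨g, fun i j hij => ?_, fun i j => ?_⟩
    · exact (S.orderEmbOfFin rfl).lt_iff_lt.1 (by rw [hg, hg]; exact hf hij)
    · rw [hord, red_lt_red_iff, hg, hg]

lemma permLE_red_mono : Monotone fun S : Finset (Fin n) => PermLE σ (red π S) := by
  intro S S' hSS' h
  obtain ⟨f, hf, hfS, hord⟩ := permLE_red_iff.1 h
  exact permLE_red_iff.2 ⟨f, hf, fun i => hSS' (hfS i), hord⟩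

lemma IsEmb.permLE_red {T : Finset (Fin n)} (h : IsEmb π T σ) : PermLE σ (red π T) := by
  obtain ⟨hc, hv⟩ := h
  refine ⟨Fin.cast hc.symm, Fin.cast_strictMono _, fun i j => ?_⟩
  rw [Fin.lt_def, Fin.lt_def (a := red π T _), hv, hv, Fin.cast_cast, Fin.cast_cast,
    Fin.cast_eq_self, Fin.cast_eq_self]

lemma exists_isEmb_subset_of_permLE_red {S : Finset (Fin n)} (h : PermLE σ (red π S)) :
    ∃ T ⊆ S, IsEmb π T σ := by
  obtain ⟨f, hf, hfS, hord⟩ := permLE_red_iff.1 h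
  let T := Finset.univ.image f
  have hTS : T ⊆ S := by
    simp only [T, Finset.image_subset_iff]
    exact fun i _ => hfS i
  have hcard : T.card = m := by
    rw [Finset.card_image_of_injective _ hf.injective, Finset.card_univ, Fintype.card_fin]
  have hT : ∀ i, T.orderEmbOfFin rfl i = f (Fin.cast hcard i) := fun i =>
    (congrFun (Finset.orderEmbOfFin_unique rfl (fun _ => Finset.mem_image_of_mem f
      (Finset.mem_univ _)) (hf.comp (Fin.cast_strictMono hcard))) i).symm
  refine ⟨T, hTS, hcard, val_eq_of_lt_iff_lt _ σ hcard fun i j => ?_⟩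
  rw [red_lt_red_iff, hT, hT, hord]

end PatternContainment

def PriorityOrd {α : Type*} (P : α → Prop) (r : α → α → Prop) (a b : α) : Prop :=
  (P a ∧ ¬ P b) ∨ ((P a ↔ P b) ∧ r a b)

namespace PriorityOrd

variable {α : Type*} {P : α → Prop} {r : α → α → Prop}

lemma asymm [IsStrictOrder α r] {a b : α} :
    PriorityOrd P r a b → ¬ PriorityOrd P r b a := by
  rintro (⟨ha, hb⟩ | ⟨hab, h⟩) (⟨hb', ha'⟩ | ⟨hba, h'⟩)
  · exact hb hb'
  · exact hb (hba.2 ha)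
  · exact ha' (hab.2 hb')
  · exact asymm_of r h h'

lemma trans [IsStrictOrder α r] {a b d : α} :
    PriorityOrd P r a b → PriorityOrd P r b d → PriorityOrd P r a d := by
  rintro (⟨ha, hb⟩ | ⟨hab, h⟩) (⟨hb', hd⟩ | ⟨hbd, h'⟩)
  · exact absurd hb' hb
  · exact Or.inl ⟨ha, fun hd => hb (hbd.2 hd)⟩
  · exact Or.inl ⟨hab.2 hb', hd⟩
  · exact Or.inr ⟨hab.trans hbd, _root_.trans_of r h h'⟩

lemma total [IsStrictTotalOrder α r] {a b : α} (hab : a ≠ b) :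
    PriorityOrd P r a b ∨ PriorityOrd P r b a := by
  by_cases ha : P a <;> by_cases hb : P b <;>
    rcases trichotomous_of r a b with h | h | h <;> simp_all [PriorityOrd]

end PriorityOrd

section RecursiveAtomOrdering

variable {α : Type*} [PartialOrder α]

def IsR2AtomOrdering (t : α) (o : α → α → Prop) : Prop :=
  (∀ a b : α, t ⋖ a → t ⋖ b → a ≠ b → (o a b ∨ o b a)) ∧
    (∀ a b : α, o a b → ¬ o b a) ∧
    (∀ a b d : α, o a b → o b d → o a d) ∧
    (∀ a b : α, t ⋖ a → t ⋖ b → o a b → ∀ y : α, a ≤ y → b ≤ y →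
      ∃ k, t ⋖ k ∧ o k b ∧ ∃ z, b ⋖ z ∧ z ≤ y ∧ k < z)

def UpperSemimodularAt (t : α) : Prop :=
  ∀ a b y : α, t ⋖ a → t ⋖ b → a ≠ b → a ≤ y → b ≤ y →
    ∃ z, b ⋖ z ∧ z ≤ y ∧ a < z

lemma UpperSemimodularAt.isR2AtomOrdering {t : α} (ht : UpperSemimodularAt t)
    {o : α → α → Prop}
    (htot : ∀ a b : α, t ⋖ a → t ⋖ b → a ≠ b → (o a b ∨ o b a))
    (hasym : ∀ a b : α, o a b → ¬ o b a)
    (htrans : ∀ a b d : α, o a b → o b d → o a d) :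
    IsR2AtomOrdering t o := by
  refine ⟨htot, hasym, htrans, fun a b hta htb hab y hay hby => ?_⟩
  have hne : a ≠ b := by
    rintro rfl
    exact hasym a a hab hab
  exact ⟨a, hta, hab, ht a b y hta htb hne hay hby⟩

lemma upperSemimodularAt_of_isUpperModularLattice {L : Type*} [Lattice L]
    [IsUpperModularLattice L] (t : L) : UpperSemimodularAt t := by
  intro a b y hta htb hab hay hby
  have hinf : a ⊓ b = t := by
    rcases hta.eq_or_eq (le_inf hta.le htb.le) inf_le_left with h | h
    · exact h
    · rcases htb.eq_or_eq hta.le (inf_eq_left.1 h) with h' | h'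
      · exact absurd h' hta.lt.ne'
      · exact absurd h' hab
  refine ⟨a ⊔ b, covBy_sup_of_inf_covBy_left (hinf ▸ hta), sup_le hay hby,
    left_lt_sup.2 fun hba => ?_⟩
  rw [inf_eq_right.2 hba] at hinf
  exact htb.lt.ne' hinf

lemma OrderEmbedding.upperSemimodularAt_apply_iff {β : Type*} [PartialOrder β] (f : α ↪o β)
    (hf : IsUpperSet (Set.range f)) {t : α} :
    UpperSemimodularAt (f t) ↔ UpperSemimodularAt t := by
  have hcov {a b : α} : f a ⋖ f b ↔ a ⋖ b := hf.ordConnected.apply_covBy_apply_iff f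
  have hmem {a : α} {x : β} (h : f a ≤ x) : ∃ b, f b = x := hf h ⟨a, rfl⟩
  constructor
  · intro h a b y hta htb hab hay hby
    obtain ⟨z, hbz, hzy, haz⟩ := h (f a) (f b) (f y) (hcov.2 hta) (hcov.2 htb)
      (f.injective.ne hab) (f.le_iff_le.2 hay) (f.le_iff_le.2 hby)
    obtain ⟨z, rfl⟩ := hmem hbz.le
    exact ⟨z, hcov.1 hbz, f.le_iff_le.1 hzy, f.lt_iff_lt.1 haz⟩
  · intro h a b y hta htb hab hay hby
    obtain ⟨a, rfl⟩ := hmem hta.le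
    obtain ⟨b, rfl⟩ := hmem htb.le
    obtain ⟨y, rfl⟩ := hmem (hta.le.trans hay)
    obtain ⟨z, hbz, hzy, haz⟩ := h a b y (hcov.1 hta) (hcov.1 htb) (ne_of_apply_ne f hab)
      (f.le_iff_le.1 hay) (f.le_iff_le.1 hby)
    exact ⟨f z, hcov.2 hbz, f.le_iff_le.2 hzy, f.lt_iff_lt.2 haz⟩

def CoversEarlier (o : α → α → Prop) (β t x : α) : Prop :=
  ∃ γ, β ⋖ γ ∧ o γ t ∧ γ ⋖ x

/-- The chain is listed from the top down, so that the previous level is its tail. -/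
def recAtomOrd (r₀ r : α → α → Prop) : List α → α → α → Prop
  | [] => fun _ _ => False
  | [_] => r₀
  | t :: β :: c => PriorityOrd (CoversEarlier (recAtomOrd r₀ r (β :: c)) β t) r

lemma RootedChain.reverse_eq_bot_or_covBy [OrderBot α] {c : List α} {t : α} (hc : RootedChain c)
    (ht : c.getLast? = some t) :
    (t = ⊥ ∧ c.reverse = [⊥]) ∨ ∃ β c', c.reverse = t :: β :: c' ∧ β ⋖ t := by
  obtain ⟨c₀, rfl⟩ := List.getLast?_eq_some_iff.1 ht
  rcases List.eq_nil_or_concat' c₀ with rfl | ⟨c₁, β, rfl⟩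
  · have : t = ⊥ := by simpa [RootedChain] using hc.1
    exact Or.inl ⟨this, by simp [this]⟩
  · exact Or.inr ⟨β, c₁.reverse, by simp,
      List.isChain_pair.1 (hc.2.suffix ⟨c₁, by simp⟩)⟩

theorem hasRAO_of_upperSemimodularAt [OrderBot α] {r₀ : α → α → Prop}
    (h₀ : IsR2AtomOrdering ⊥ r₀) (hmod : ∀ t : α, t ≠ ⊥ → UpperSemimodularAt t) :
    HasRAO α := by
  refine ⟨fun c => recAtomOrd r₀ WellOrderingRel c.reverse, fun c hc t ht => ?_, ?_⟩
  · show IsR2AtomOrdering t (recAtomOrd r₀ WellOrderingRel c.reverse)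
    rcases hc.reverse_eq_bot_or_covBy ht with ⟨rfl, hrev⟩ | ⟨β, c', hrev, hβt⟩
    · rw [hrev]
      exact h₀
    · rw [hrev]
      exact (hmod t (ne_bot_of_gt hβt.lt)).isR2AtomOrdering
        (fun _ _ _ _ => PriorityOrd.total) (fun _ _ => PriorityOrd.asymm)
        (fun _ _ _ => PriorityOrd.trans)
  · intro c' β t _ hβ a b _ _ ha hb
    obtain ⟨c'', rfl⟩ := List.getLast?_eq_some_iff.1 hβ
    simp only [List.reverse_append, List.reverse_singleton,
      List.cons_append, List.nil_append] at ha hb ⊢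
    exact Or.inl ⟨ha, hb⟩

end RecursiveAtomOrdering

def withTopToFinset {ι : Type*} [Fintype ι] (p : Finset ι → Prop) :
    WithTop {S : Finset ι // S ≠ Finset.univ ∧ p S} ↪o Finset ι :=
  OrderEmbedding.ofMapLEIff (WithTop.recTopCoe Finset.univ Subtype.val) fun a b => by
    induction a with
    | top => induction b with
      | top => simp
      | coe T => simpa [Finset.univ_subset_iff] using T.2.1
    | coe S => induction b <;> simp

lemma isUpperSet_range_withTopToFinset {ι : Type*} [Fintype ι] {p : Finset ι → Prop}
    (hp : Monotone p) : IsUpperSet (Set.range (withTopToFinset p)) := by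
  rintro _ y hxy ⟨a, rfl⟩
  by_cases hy : y = Finset.univ
  · exact ⟨⊤, hy.symm⟩
  induction a with
  | top => exact absurd (Finset.univ_subset_iff.1 hxy) hy
  | coe S => exact ⟨WithTop.some ⟨y, hy, hp hxy S.2.2⟩, rfl⟩

lemma WithBot.isUpperSet_range_coe {α : Type*} [Preorder α] :
    IsUpperSet (Set.range ((↑) : α → WithBot α)) := by
  rintro _ y hxy ⟨a, rfl⟩
  induction y with
  | bot => exact absurd hxy (WithBot.not_coe_le_bot a)
  | coe b => exact ⟨b, rfl⟩

section Bd

variable {α : Type*}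

lemma toBd_injective : Function.Injective (toBd : α → Bd α) :=
  WithBot.coe_injective.comp WithTop.coe_injective

lemma exists_eq_toBd {x : Bd α} (h₁ : x ≠ ⊥) (h₂ : x ≠ ⊤) : ∃ a, x = toBd a := by
  rcases x with _ | _ | a
  · exact absurd rfl h₁
  · exact absurd rfl h₂
  · exact ⟨a, rfl⟩

lemma bot_covBy_toBd_iff [PartialOrder α] {a : α} : (⊥ : Bd α) ⋖ toBd a ↔ IsMin a := by
  simp only [toBd, WithBot.bot_covBy_coe, isMin_iff_forall_not_lt, WithTop.forall,
    not_top_lt, WithTop.coe_lt_coe, not_false_eq_true, true_and]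

end Bd

section Astar

variable {m n : ℕ} {σ : Equiv.Perm (Fin m)} {π : Equiv.Perm (Fin n)}

lemma isMin_iff_isEmb {K : AstarP π σ} : IsMin K ↔ IsEmb π K.1 σ := by
  constructor
  · intro hK
    obtain ⟨T, hTK, hT⟩ := exists_isEmb_subset_of_permLE_red K.2.2
    have hT' : T ≠ Finset.univ := fun h => K.2.1 (Finset.univ_subset_iff.1 (h ▸ hTK))
    have hKT : K.1 ⊆ T := @hK ⟨T, hT', hT.permLE_red⟩ hTK
    rwa [Finset.Subset.antisymm hTK hKT] at hT
  · intro hK L hLK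
    have hcard : K.1.card ≤ L.1.card := by
      rw [hK.1]
      exact L.2.2.card_le
    exact (Finset.eq_of_subset_of_card_le hLK hcard).ge

lemma upperSemimodularAt_bd_astarP {t : Bd (AstarP π σ)} (ht : t ≠ ⊥) :
    UpperSemimodularAt t := by
  lift t to WithTop (AstarP π σ) using ht
  refine (WithBot.coeOrderHom.upperSemimodularAt_apply_iff WithBot.isUpperSet_range_coe).2
    ((OrderEmbedding.upperSemimodularAt_apply_iff (withTopToFinset _)
      (isUpperSet_range_withTopToFinset permLE_red_mono)).1 ?_)
  exact upperSemimodularAt_of_isUpperModularLattice _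

def bdOrd (prec : Finset (Fin n) → Finset (Fin n) → Prop) (a b : Bd (AstarP π σ)) : Prop :=
  ∃ S T : AstarP π σ, a = toBd S ∧ b = toBd T ∧ prec S.1 T.1

lemma isR2AtomOrdering_bot_bdOrd {prec : Finset (Fin n) → Finset (Fin n) → Prop}
    (htot : ∀ S T : Finset (Fin n), IsEmb π S σ → IsEmb π T σ → S ≠ T →
      (prec S T ∨ prec T S))
    (hasym : ∀ S T : Finset (Fin n), prec S T → ¬ prec T S)
    (htrans : ∀ S T U : Finset (Fin n), prec S T → prec T U → prec S U)
    (hR2 : ∀ S T : AstarP π σ, IsEmb π S.1 σ → IsEmb π T.1 σ → prec S.1 T.1 →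
      ∀ y : Bd (AstarP π σ), toBd S ≤ y → toBd T ≤ y →
        ∃ K : AstarP π σ, IsEmb π K.1 σ ∧ prec K.1 T.1 ∧
          ∃ z : Bd (AstarP π σ), toBd T ⋖ z ∧ z ≤ y ∧ toBd K < z) :
    IsR2AtomOrdering ⊥ (bdOrd prec : Bd (AstarP π σ) → _ → _) := by
  have hemb {K : AstarP π σ} : ⊥ ⋖ toBd K ↔ IsEmb π K.1 σ :=
    bot_covBy_toBd_iff.trans isMin_iff_isEmb
  have hatom {a b : Bd (AstarP π σ)} (ha : ⊥ ⋖ a) (hb : ⊥ ⋖ b) (hab : a ≠ b) :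
      ∃ S : AstarP π σ, a = toBd S ∧ IsEmb π S.1 σ := by
    have hatop : a ≠ ⊤ := by
      rintro rfl
      exact ha.2 hb.lt (lt_top_iff_ne_top.2 hab.symm)
    obtain ⟨S, rfl⟩ := exists_eq_toBd ha.lt.ne' hatop
    exact ⟨S, rfl, hemb.1 ha⟩
  refine ⟨fun a b ha hb hab => ?_, ?_, ?_, ?_⟩
  · obtain ⟨S, rfl, hS⟩ := hatom ha hb hab
    obtain ⟨T, rfl, hT⟩ := hatom hb ha hab.symm
    rcases htot S.1 T.1 hS hT fun h => hab (congrArg toBd (Subtype.ext h)) with h | h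
    exacts [Or.inl ⟨S, T, rfl, rfl, h⟩, Or.inr ⟨T, S, rfl, rfl, h⟩]
  · rintro a b ⟨S, T, rfl, rfl, h⟩ ⟨T', S', hT, hS, h'⟩
    cases toBd_injective hT
    cases toBd_injective hS
    exact hasym _ _ h h'
  · rintro a b d ⟨S, T, rfl, rfl, h⟩ ⟨T', U, hT, rfl, h'⟩
    cases toBd_injective hT
    exact ⟨S, U, rfl, rfl, htrans _ _ _ h h'⟩
  · rintro a b ha hb ⟨S, T, rfl, rfl, h⟩ y hay hby
    obtain ⟨K, hK, hKT, z, hz⟩ := hR2 S T (hemb.1 ha) (hemb.1 hb) h y hay hby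
    exact ⟨toBd K, hemb.2 hK, ⟨K, T, rfl, rfl, hKT⟩, z, hz⟩

end Astar

theorem stmt17_general {m n : ℕ} (σ : Equiv.Perm (Fin m)) (π : Equiv.Perm (Fin n))
    (prec : Finset (Fin n) → Finset (Fin n) → Prop)
    (htot : ∀ S T : Finset (Fin n), IsEmb π S σ → IsEmb π T σ → S ≠ T →
      (prec S T ∨ prec T S))
    (hasym : ∀ S T : Finset (Fin n), prec S T → ¬ prec T S)
    (htrans : ∀ S T U : Finset (Fin n), prec S T → prec T U → prec S U)
    (hR2 : ∀ S T : AstarP π σ, IsEmb π S.1 σ → IsEmb π T.1 σ → prec S.1 T.1 →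
      ∀ y : Bd (AstarP π σ), toBd S ≤ y → toBd T ≤ y →
        ∃ K : AstarP π σ, IsEmb π K.1 σ ∧ prec K.1 T.1 ∧
          ∃ z : Bd (AstarP π σ), toBd T ⋖ z ∧ z ≤ y ∧ toBd K < z) :
    HasRAO (Bd (AstarP π σ)) :=
  hasRAO_of_upperSemimodularAt (isR2AtomOrdering_bot_bdOrd htot hasym htrans hR2)
    fun _ => upperSemimodularAt_bd_astarP

/-- Let `σ < π` be permutations in the classical pattern order. If
there is a linear ordering `prec` of the embeddings of `σ` in `π` (the atoms of
`Â*(σ,π)`) satisfying condition (R2) in the bounded poset `Â*(σ,π)`, then `Â*(σ,π)`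
admits a recursive atom ordering. -/
theorem stmt17 {m n : ℕ} (σ : Equiv.Perm (Fin m)) (π : Equiv.Perm (Fin n))
    (h : PermLT σ π)
    (prec : Finset (Fin n) → Finset (Fin n) → Prop)
    (htot : ∀ S T : Finset (Fin n), IsEmb π S σ → IsEmb π T σ → S ≠ T →
      (prec S T ∨ prec T S))
    (hasym : ∀ S T : Finset (Fin n), prec S T → ¬ prec T S)
    (htrans : ∀ S T U : Finset (Fin n), prec S T → prec T U → prec S U)
    (hR2 : ∀ S T : AstarP π σ, IsEmb π S.1 σ → IsEmb π T.1 σ → prec S.1 T.1 →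
      ∀ y : Bd (AstarP π σ), toBd S ≤ y → toBd T ≤ y →
        ∃ K : AstarP π σ, IsEmb π K.1 σ ∧ prec K.1 T.1 ∧
          ∃ z : Bd (AstarP π σ), toBd T ⋖ z ∧ z ≤ y ∧ toBd K < z) :
    HasRAO (Bd (AstarP π σ)) :=
  stmt17_general σ π prec htot hasym htrans hR2
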